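/- Let B ⊆ B(G) be a von Neumann algebra, H a complex Hilbert space, ρ' : B' → B(H) a unital *-homomorphism, and C = {x ∈ B(G,H) : ρ'(b') x = x b' for all b' ∈ B'} the intertwiner space. Suppose E ⊆ C is a linear subspace which is closed in the strong operator topology, satisfies x b ∈ E for all x ∈ E and b ∈ B, and is such that the linear span of {x g : x ∈ E, g ∈ G} is dense in H. Then E = C. (In particular, for a given representation ρ' of B' on H there is at most one strongly closed B-submodule E of B(G,H) acting totally on H whose commutant lifting is ρ'.) -/

import Mathlib

/-!
For `z ∈ E` and an intertwiner `w`, taking adjoints in `ρ'(b'*) z = z b'*` shows that `z* w`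
commutes with `B'`, so `z* w ∈ B'' = B` and hence `y z* w ∈ E` for all `y, z ∈ E`. The operators
`y z*` (`y, z ∈ E`) form an adjoint-closed family, nondegenerate because `E` acts totally on `H`.
Given an intertwiner `x` and `g₁, …, gₙ ∈ G`, the closure `K` of `{(e gᵢ)ᵢ : e ∈ E}` in `Hⁿ` is
invariant under the diagonal action of this family, hence so is `Kᗮ`. The family maps the
`Kᗮ`-component of `(x gᵢ)ᵢ` into `K ∩ Kᗮ = 0`, so that component vanishes. Thus `x` is a strong
limit of elements of `E`, and `x ∈ E`.
-/
open scoped InnerProductSpace ComplexOrder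
open Filter ContinuousLinearMap

noncomputable section

universe u

section Defs

variable {X Y : Type u}
  [NormedAddCommGroup X] [InnerProductSpace ℂ X] [CompleteSpace X]
  [NormedAddCommGroup Y] [InnerProductSpace ℂ Y] [CompleteSpace Y]

/-- `S` is (complex-)linear on the subset `A`. -/
def LinearOn (A : Set (X →L[ℂ] X)) (S : (X →L[ℂ] X) → (Y →L[ℂ] Y)) : Prop :=
  (∀ a₁ ∈ A, ∀ a₂ ∈ A, S (a₁ + a₂) = S a₁ + S a₂) ∧
    ∀ (c : ℂ), ∀ a ∈ A, S (c • a) = c • S a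

/-- `S` is completely positive on `A`: for all `n`, `x : Fin n → A` and vectors
`v : Fin n → Y` the matrix-positivity expression `∑ ⟪v i, S (x i ∗ x j) (v j)⟫ ≥ 0` holds.
(This is the standard equivalent form of positivity of the entrywise applied maps on
`n × n` operator matrices.) -/
def CompletelyPositiveOn (A : Set (X →L[ℂ] X)) (S : (X →L[ℂ] X) → (Y →L[ℂ] Y)) : Prop :=
  ∀ (n : ℕ) (x : Fin n → (X →L[ℂ] X)), (∀ i, x i ∈ A) → ∀ v : Fin n → Y,
    0 ≤ ∑ i, ∑ j, ⟪v i, (S (star (x i) * x j)) (v j)⟫_ℂ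

/-- `S` is normal on `A`: the restriction of `S` to the closed unit ball of `A` is
continuous with respect to the weak operator topologies (net/filter formulation). -/
def NormalOn (A : Set (X →L[ℂ] X)) (S : (X →L[ℂ] X) → (Y →L[ℂ] Y)) : Prop :=
  ∀ (l : Filter (X →L[ℂ] X)), ∀ a ∈ A,
    (∀ᶠ x in l, x ∈ A ∧ ‖x‖ ≤ 1) →
    (∀ x₁ x₂ : X, Tendsto (fun y => ⟪x₁, y x₂⟫_ℂ) l (nhds ⟪x₁, a x₂⟫_ℂ)) →
    ∀ y₁ y₂ : Y, Tendsto (fun y => ⟪y₁, (S y) y₂⟫_ℂ) l (nhds ⟪y₁, (S a) y₂⟫_ℂ)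

/-- `j` is a ∗-homomorphism on `A`. -/
def StarHomOn (A : Set (X →L[ℂ] X)) (j : (X →L[ℂ] X) → (Y →L[ℂ] Y)) : Prop :=
  LinearOn A j ∧ (∀ a₁ ∈ A, ∀ a₂ ∈ A, j (a₁ * a₂) = j a₁ * j a₂) ∧
    ∀ a ∈ A, j (star a) = star (j a)

end Defs


/-- A set of operators is closed in the strong operator topology
(net/filter formulation of closedness). -/
def SOTClosed {X Y : Type u}
    [NormedAddCommGroup X] [InnerProductSpace ℂ X] [CompleteSpace X]
    [NormedAddCommGroup Y] [InnerProductSpace ℂ Y] [CompleteSpace Y]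
    (E : Set (X →L[ℂ] Y)) : Prop :=
  ∀ (l : Filter (X →L[ℂ] Y)) (x : X →L[ℂ] Y), l.NeBot → (∀ᶠ y in l, y ∈ E) →
    (∀ v : X, Tendsto (fun y : X →L[ℂ] Y => y v) l (nhds (x v))) → x ∈ E

theorem SOTClosed.mem_of_forall_exists_dist_lt {X Y : Type u}
    [NormedAddCommGroup X] [InnerProductSpace ℂ X] [CompleteSpace X]
    [NormedAddCommGroup Y] [InnerProductSpace ℂ Y] [CompleteSpace Y]
    {E : Set (X →L[ℂ] Y)} (hE : SOTClosed E) {x : X →L[ℂ] Y}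
    (hx : ∀ (F : Finset X) (ε : ℝ), 0 < ε → ∃ e ∈ E, ∀ v ∈ F, dist (e v) (x v) < ε) :
    x ∈ E := by
  classical
  choose e heE he using fun p : Finset X × ℕ => hx p.1 (1 / (p.2 + 1)) Nat.one_div_pos_of_nat
  refine hE (map e atTop) x (map_neBot (hf := atTop_neBot)) (eventually_map.2 (.of_forall heE))
    fun v => tendsto_map'_iff.2 <| Metric.tendsto_nhds.2 fun δ hδ => ?_
  obtain ⟨N, hN⟩ := exists_nat_one_div_lt hδ
  exact (eventually_ge_atTop ({v}, N)).mono fun p hp =>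
    (he p v (hp.1 (Finset.mem_singleton_self v))).trans_le (Nat.one_div_le_one_div hp.2) |>.trans hN

section Density

variable {𝕜 X : Type*} [RCLike 𝕜] [NormedAddCommGroup X] [InnerProductSpace 𝕜 X]
  [CompleteSpace X]

theorem Submodule.mem_topologicalClosure_of_forall_apply_mem {S : Set (X →L[𝕜] X)}
    (hS : ∀ a ∈ S, adjoint a ∈ S) (hnd : ∀ k : X, (∀ a ∈ S, a k = 0) → k = 0)
    {M : Submodule 𝕜 X} (hM : ∀ a ∈ S, ∀ u ∈ M, a u ∈ M) {v : X} (hv : ∀ a ∈ S, a v ∈ M) :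
    v ∈ M.topologicalClosure := by
  set K := M.topologicalClosure
  have hK : ∀ a ∈ S, ∀ u ∈ K, a u ∈ K := fun a ha u hu =>
    map_mem_closure a.continuous hu fun w hw => hM a ha w hw
  have hKperp : ∀ a ∈ S, ∀ u ∈ Kᗮ, a u ∈ Kᗮ := fun a ha u hu =>
    (K.mem_orthogonal _).2 fun w hw => by
      rw [← adjoint_inner_left]
      exact (K.mem_orthogonal u).1 hu _ (hK _ (hS a ha) w hw)
  have hdefect : v - K.starProjection v = 0 := hnd _ fun a ha => by
    have hmemK : a (v - K.starProjection v) ∈ K := by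
      rw [map_sub]
      exact K.sub_mem (M.le_topologicalClosure (hv a ha)) (hK a ha _ (K.starProjection_apply_mem v))
    have hmemKperp : a (v - K.starProjection v) ∈ Kᗮ :=
      hKperp a ha _ (K.sub_starProjection_mem_orthogonal v)
    exact (Submodule.mem_bot 𝕜).1 (K.inf_orthogonal_eq_bot ▸ ⟨hmemK, hmemKperp⟩)
  rw [sub_eq_zero.1 hdefect]
  exact K.starProjection_apply_mem v

end Density

section Amplification

variable {𝕜 X : Type*} [RCLike 𝕜] [NormedAddCommGroup X] [InnerProductSpace 𝕜 X]
  (ι : Type*)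

def ContinuousLinearMap.diagPiLp (a : X →L[𝕜] X) :
    PiLp 2 (fun _ : ι => X) →L[𝕜] PiLp 2 (fun _ : ι => X) :=
  (PiLp.continuousLinearEquiv 2 𝕜 _).symm.toContinuousLinearMap ∘L
    piMap (fun _ => a) ∘L (PiLp.continuousLinearEquiv 2 𝕜 _).toContinuousLinearMap

@[simp]
theorem ContinuousLinearMap.diagPiLp_apply (a : X →L[𝕜] X) (v : PiLp 2 (fun _ : ι => X))
    (i : ι) : diagPiLp ι a v i = a (v i) :=
  rfl

theorem ContinuousLinearMap.adjoint_diagPiLp [Fintype ι] [CompleteSpace X] (a : X →L[𝕜] X) :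
    adjoint (diagPiLp ι a) = diagPiLp ι (adjoint a) :=
  ((eq_adjoint_iff _ _).2 fun v w => by simp [PiLp.inner_apply, adjoint_inner_left]).symm

end Amplification

section Intertwiners

variable {𝕜 G H : Type*} [RCLike 𝕜] [NormedAddCommGroup G] [InnerProductSpace 𝕜 G]
  [CompleteSpace G] [NormedAddCommGroup H] [InnerProductSpace 𝕜 H] [CompleteSpace H]

theorem eq_zero_of_forall_apply_adjoint_apply_eq_zero {E : Set (G →L[𝕜] H)}
    (htotal : Dense (Submodule.span 𝕜 {h : H | ∃ x ∈ E, ∃ g : G, x g = h} : Set H)) {k : H}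
    (hk : ∀ z ∈ E, z (adjoint z k) = 0) : k = 0 := by
  have hadj : ∀ z ∈ E, adjoint z k = 0 := fun z hz => by
    rw [← inner_self_eq_zero (𝕜 := 𝕜), adjoint_inner_left, hk z hz, inner_zero_right]
  have hspan : Submodule.span 𝕜 {h : H | ∃ x ∈ E, ∃ g : G, x g = h} ≤ (𝕜 ∙ k)ᗮ := by
    refine Submodule.span_le.2 ?_
    rintro _ ⟨z, hz, g, rfl⟩
    rw [SetLike.mem_coe, Submodule.mem_orthogonal_singleton_iff_inner_right,
      ← adjoint_inner_left, hadj z hz, inner_zero_left]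
  have hk_perp : k ∈ (𝕜 ∙ k)ᗮ := by
    refine Submodule.topologicalClosure_minimal _ hspan (Submodule.isClosed_orthogonal _) ?_
    rw [Submodule.dense_iff_topologicalClosure_eq_top.1 htotal]
    trivial
  exact inner_self_eq_zero.1 (Submodule.mem_orthogonal_singleton_iff_inner_right.1 hk_perp)

theorem exists_mem_forall_dist_lt_of_forall_comp_adjoint_comp_mem {E : Submodule 𝕜 (G →L[𝕜] H)}
    (htotal : Dense (Submodule.span 𝕜 {h : H | ∃ x ∈ E, ∃ g : G, x g = h} : Set H))
    (hE : ∀ y ∈ E, ∀ z ∈ E, ∀ e ∈ E, y ∘L (adjoint z ∘L e) ∈ E)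
    {x : G →L[𝕜] H} (hx : ∀ y ∈ E, ∀ z ∈ E, y ∘L (adjoint z ∘L x) ∈ E)
    (F : Finset G) {ε : ℝ} (hε : 0 < ε) : ∃ e ∈ E, ∀ g ∈ F, dist (e g) (x g) < ε := by
  let eval : (G →L[𝕜] H) →ₗ[𝕜] PiLp 2 (fun _ : F => H) :=
    (WithLp.linearEquiv 2 𝕜 _).symm.toLinearMap ∘ₗ
      LinearMap.pi fun g => (apply 𝕜 H g.1).toLinearMap
  let S := {a | ∃ y ∈ E, ∃ z ∈ E, diagPiLp F (y ∘L adjoint z) = a}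
  have hS : ∀ a ∈ S, adjoint a ∈ S := by
    rintro _ ⟨y, hy, z, hz, rfl⟩
    exact ⟨z, hz, y, hy, by rw [adjoint_diagPiLp, adjoint_comp, adjoint_adjoint]⟩
  have hnd : ∀ k, (∀ a ∈ S, a k = 0) → k = 0 := fun k hk => by
    ext i
    refine eq_zero_of_forall_apply_adjoint_apply_eq_zero htotal fun z hz => ?_
    simpa using congr($(hk _ ⟨z, hz, z, hz, rfl⟩) i)
  have hmem : eval x ∈ (E.map eval).topologicalClosure := by
    refine Submodule.mem_topologicalClosure_of_forall_apply_mem hS hnd ?_ ?_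
    · rintro _ ⟨y, hy, z, hz, rfl⟩ _ ⟨e, he, rfl⟩
      exact ⟨_, hE y hy z hz e he, rfl⟩
    · rintro _ ⟨y, hy, z, hz, rfl⟩
      exact ⟨_, hx y hy z hz, rfl⟩
  obtain ⟨_, ⟨e, he, rfl⟩, hdist⟩ := Metric.mem_closure_iff.1 hmem ε hε
  rw [dist_comm] at hdist
  exact ⟨e, he, fun g hg => (PiLp.dist_apply_le (eval e) (eval x) ⟨g, hg⟩).trans_lt hdist⟩

end Intertwiners

theorem adjoint_comp_mem_of_intertwines {G H : Type*}
    [NormedAddCommGroup G] [InnerProductSpace ℂ G] [CompleteSpace G]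
    [NormedAddCommGroup H] [InnerProductSpace ℂ H] [CompleteSpace H]
    {B : VonNeumannAlgebra G} {ρ' : (G →L[ℂ] G) → (H →L[ℂ] H)}
    (hρ' : ∀ b' ∈ B.commutant, ρ' (star b') = star (ρ' b')) {z w : G →L[ℂ] H}
    (hz : ∀ b' ∈ B.commutant, ρ' b' ∘L z = z ∘L b')
    (hw : ∀ b' ∈ B.commutant, ρ' b' ∘L w = w ∘L b') : adjoint z ∘L w ∈ B := by
  rw [← B.commutant_commutant, VonNeumannAlgebra.mem_commutant_iff]
  intro b' hb'
  have hz_adj : adjoint z ∘L ρ' b' = b' ∘L adjoint z := by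
    have h := congrArg adjoint (hz (star b') (star_mem hb'))
    rw [hρ' b' hb'] at h
    simpa only [adjoint_comp, ← star_eq_adjoint, star_star] using h
  simp only [mul_def]
  rw [← comp_assoc, ← hz_adj, comp_assoc, hw b' hb', comp_assoc]

theorem submodule_of_intertwiner_space_eq_general
    {G H : Type u}
    [NormedAddCommGroup G] [InnerProductSpace ℂ G] [CompleteSpace G]
    [NormedAddCommGroup H] [InnerProductSpace ℂ H] [CompleteSpace H]
    (B : VonNeumannAlgebra G)
    (ρ' : (G →L[ℂ] G) → (H →L[ℂ] H))
    (hρ'hom : StarHomOn ((B.commutant : VonNeumannAlgebra G) : Set (G →L[ℂ] G)) ρ')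
    (E : Set (G →L[ℂ] H))
    (hEsub : E ⊆ {x : G →L[ℂ] H | ∀ b' ∈ B.commutant, (ρ' b') ∘L x = x ∘L b'})
    (hzero : (0 : G →L[ℂ] H) ∈ E)
    (hadd : ∀ x ∈ E, ∀ y ∈ E, x + y ∈ E)
    (hsmul : ∀ (c : ℂ), ∀ x ∈ E, c • x ∈ E)
    (hclosed : SOTClosed E)
    (hmod : ∀ x ∈ E, ∀ b ∈ B, x ∘L b ∈ E)
    (htotal : Dense ((Submodule.span ℂ {h : H | ∃ x ∈ E, ∃ g : G, x g = h} :
      Submodule ℂ H) : Set H)) :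
    E = {x : G →L[ℂ] H | ∀ b' ∈ B.commutant, (ρ' b') ∘L x = x ∘L b'} := by
  let E' : Submodule ℂ (G →L[ℂ] H) :=
    { carrier := E
      add_mem' := fun ha hb => hadd _ ha _ hb
      zero_mem' := hzero
      smul_mem' := hsmul }
  set C := {x : G →L[ℂ] H | ∀ b' ∈ B.commutant, (ρ' b') ∘L x = x ∘L b'}
  have hB : ∀ z ∈ E, ∀ w ∈ C, adjoint z ∘L w ∈ B := fun z hz w hw =>
    adjoint_comp_mem_of_intertwines hρ'hom.2.2 (hEsub hz) hw
  refine hEsub.antisymm fun x hx => hclosed.mem_of_forall_exists_dist_lt fun F ε hε => ?_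
  exact exists_mem_forall_dist_lt_of_forall_comp_adjoint_comp_mem (E := E') htotal
    (fun y hy z hz e he => hmod y hy _ (hB z hz e (hEsub he)))
    (fun y hy z hz => hmod y hy _ (hB z hz x hx)) F hε

/-- **Uniqueness of the submodule inducing a given commutant lifting.**
Let `B ⊆ B(G)` be a von Neumann algebra, `ρ' : B' → B(H)` a unital ∗-homomorphism, and
`C = {x ∈ B(G,H) : ρ'(b') x = x b' for all b' ∈ B'}` the intertwiner space.  If `E ⊆ C`
is a strongly closed subspace with `E·B ⊆ E` whose range `{x g}` is total in `H`,
then `E = C`. -/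
theorem submodule_of_intertwiner_space_eq
    {G H : Type u}
    [NormedAddCommGroup G] [InnerProductSpace ℂ G] [CompleteSpace G]
    [NormedAddCommGroup H] [InnerProductSpace ℂ H] [CompleteSpace H]
    (B : VonNeumannAlgebra G)
    (ρ' : (G →L[ℂ] G) → (H →L[ℂ] H))
    (hρ'hom : StarHomOn ((B.commutant : VonNeumannAlgebra G) : Set (G →L[ℂ] G)) ρ')
    (hρ'unital : ρ' 1 = 1)
    (E : Set (G →L[ℂ] H))
    (hEsub : E ⊆ {x : G →L[ℂ] H | ∀ b' ∈ B.commutant, (ρ' b') ∘L x = x ∘L b'})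
    (hzero : (0 : G →L[ℂ] H) ∈ E)
    (hadd : ∀ x ∈ E, ∀ y ∈ E, x + y ∈ E)
    (hsmul : ∀ (c : ℂ), ∀ x ∈ E, c • x ∈ E)
    (hclosed : SOTClosed E)
    (hmod : ∀ x ∈ E, ∀ b ∈ B, x ∘L b ∈ E)
    (htotal : Dense ((Submodule.span ℂ {h : H | ∃ x ∈ E, ∃ g : G, x g = h} :
      Submodule ℂ H) : Set H)) :
    E = {x : G →L[ℂ] H | ∀ b' ∈ B.commutant, (ρ' b') ∘L x = x ∘L b'} :=
  submodule_of_intertwiner_space_eq_general B ρ' hρ'hom E hEsub hzero hadd hsmul hclosed hmod htotal
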